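/- arXiv:1507.02006 — 2 statements merged into one kernel-verified Lean document; each statement's English description precedes it below -/
import Mathlib

section
/- For all real numbers x1 > 0 and x2 > 0, the inequality (3*x1^2 + 6*x1*x2 + 4*x2^2)^3 * x1^2 * (2*x1 + 3*x2)^4 ≤ 3^3 * 2^4 * (x1 + x2)^12 holds. Equivalently, the difference 3^3*2^4*(x1+x2)^12 − (3x1^2+6x1x2+4x2^2)^3 * x1^2 * (2x1+3x2)^4 equals 216 x1^10 x2^2 + 2376 x1^9 x2^3 + 11925 x1^8 x2^4 + 35838 x1^7 x2^5 + 71120 x1^6 x2^6 + 96888 x1^5 x2^7 + 91152 x1^4 x2^8 + 57888 x1^3 x2^9 + 23328 x1^2 x2^10 + 5184 x1 x2^11 + 432 x2^12, which is nonnegative. -/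
theorem stmt_1 (x1 x2 : ℝ) (h1 : 0 < x1) (h2 : 0 < x2) :
    3^3*2^4*(x1+x2)^12 - (3*x1^2+6*x1*x2+4*x2^2)^3*x1^2*(2*x1+3*x2)^4
      = 216*x1^10*x2^2 + 2376*x1^9*x2^3 + 11925*x1^8*x2^4 + 35838*x1^7*x2^5
        + 71120*x1^6*x2^6 + 96888*x1^5*x2^7 + 91152*x1^4*x2^8 + 57888*x1^3*x2^9
        + 23328*x1^2*x2^10 + 5184*x1*x2^11 + 432*x2^12 ∧
    0 ≤ 216*x1^10*x2^2 + 2376*x1^9*x2^3 + 11925*x1^8*x2^4 + 35838*x1^7*x2^5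
        + 71120*x1^6*x2^6 + 96888*x1^5*x2^7 + 91152*x1^4*x2^8 + 57888*x1^3*x2^9
        + 23328*x1^2*x2^10 + 5184*x1*x2^11 + 432*x2^12 ∧
    (3*x1^2+6*x1*x2+4*x2^2)^3*x1^2*(2*x1+3*x2)^4 ≤ 3^3*2^4*(x1+x2)^12 := by
  have heq : 3^3*2^4*(x1+x2)^12 - (3*x1^2+6*x1*x2+4*x2^2)^3*x1^2*(2*x1+3*x2)^4
      = 216*x1^10*x2^2 + 2376*x1^9*x2^3 + 11925*x1^8*x2^4 + 35838*x1^7*x2^5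
        + 71120*x1^6*x2^6 + 96888*x1^5*x2^7 + 91152*x1^4*x2^8 + 57888*x1^3*x2^9
        + 23328*x1^2*x2^10 + 5184*x1*x2^11 + 432*x2^12 := by ring
  have hpos : (0:ℝ) ≤ 216*x1^10*x2^2 + 2376*x1^9*x2^3 + 11925*x1^8*x2^4 + 35838*x1^7*x2^5
        + 71120*x1^6*x2^6 + 96888*x1^5*x2^7 + 91152*x1^4*x2^8 + 57888*x1^3*x2^9
        + 23328*x1^2*x2^10 + 5184*x1*x2^11 + 432*x2^12 := by positivity
  exact ⟨heq, hpos, by linarith⟩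
end

section
/- For integers k1 ≥ 3, k2 ≥ 3 with k = k1 + k2, set a1 = √(k1/k) and a2 = √(k2/k). Then for all X1, X2 > 0, (a1^2 * X1^4 + a2^2 * X2^4) * X1^{2k1} * X2^{2k2} ≤ (a1^2 * X1 + a2^2 * X2)^{2k+4}. -/
/-!
Dehomogenize with `t = X2 / X1` and clear the denominators `k1 + k2`. The logarithm of the
quotient of the two sides, as a function of `t`, has derivative
`2 k1 k2 (t - 1) q(t) / (t (k1 + k2 t) (k1 + k2 t⁴))` with
`q(t) = k2 t⁴ - 2 t³ - 2 t² - 2 t + k1 ≥ (t - 1)² (3 t² + 4 t + 3) ≥ 0` once `k1, k2 ≥ 3`.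
So it is minimal at `t = 1`, i.e. at `X1 = X2`, where the inequality is an equality.
-/

open Real Set

lemma quartic_nonneg {m n x : ℝ} (hm : 3 ≤ m) (hn : 3 ≤ n) (hx : 0 ≤ x) :
    0 ≤ n * x ^ 4 - 2 * x ^ 3 - 2 * x ^ 2 - 2 * x + m := by
  have : 0 ≤ (x - 1) ^ 2 * (3 * x ^ 2 + 4 * x + 3) := by positivity
  nlinarith [mul_le_mul_of_nonneg_right hn (pow_nonneg hx 4)]

lemma le_of_hasDerivAt_of_mul_sub_nonneg {f f' : ℝ → ℝ} {c t : ℝ}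
    (hf : ∀ x ∈ uIcc c t, HasDerivAt f (f' x) x)
    (hf' : ∀ x ∈ uIcc c t, 0 ≤ (x - c) * f' x) : f c ≤ f t := by
  have hcont : ContinuousOn f (uIcc c t) := fun x hx => (hf x hx).continuousAt.continuousWithinAt
  have hdiff : ∀ x ∈ interior (uIcc c t), HasDerivWithinAt f (f' x) (interior (uIcc c t)) x :=
    fun x hx => (hf x (interior_subset hx)).hasDerivWithinAt
  rcases le_total c t with hct | htc
  · rw [uIcc_of_le hct] at hcont hdiff hf'
    refine monotoneOn_of_hasDerivWithinAt_nonneg (convex_Icc c t) hcont hdiff (fun x hx => ?_)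
      (left_mem_Icc.2 hct) (right_mem_Icc.2 hct) hct
    rw [interior_Icc] at hx
    exact nonneg_of_mul_nonneg_right (hf' x (Ioo_subset_Icc_self hx)) (sub_pos.2 hx.1)
  · rw [uIcc_of_ge htc] at hcont hdiff hf'
    refine antitoneOn_of_hasDerivWithinAt_nonpos (convex_Icc t c) hcont hdiff (fun x hx => ?_)
      (left_mem_Icc.2 htc) (right_mem_Icc.2 htc) htc
    rw [interior_Icc] at hx
    exact nonpos_of_mul_nonneg_right (hf' x (Ioo_subset_Icc_self hx)) (sub_neg.2 hx.2)

/-- Up to an additive constant, `-logRatio k1 k2 (X2 / X1)` is `log D(X1, X2)`. -/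
noncomputable def logRatio (m n x : ℝ) : ℝ :=
  (2 * (m + n) + 4) * log (m + n * x) - log (m + n * x ^ 4) - 2 * n * log x

lemma hasDerivAt_logRatio {m n x : ℝ} (hm : 0 < m) (hn : 0 ≤ n) (hx : 0 < x) :
    HasDerivAt (logRatio m n)
      (2 * m * n * (x - 1) * (n * x ^ 4 - 2 * x ^ 3 - 2 * x ^ 2 - 2 * x + m)
        / (x * (m + n * x) * (m + n * x ^ 4))) x := by
  have h1 : m + n * x ≠ 0 := by positivity
  have h4 : m + n * x ^ 4 ≠ 0 := by positivity
  have hlin : HasDerivAt (fun y => m + n * y) n x := by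
    simpa using ((hasDerivAt_id x).const_mul n).const_add m
  have hquart : HasDerivAt (fun y => m + n * y ^ 4) (n * (4 * x ^ 3)) x := by
    simpa using ((hasDerivAt_pow 4 x).const_mul n).const_add m
  refine (((hlin.log h1).const_mul (2 * (m + n) + 4)).sub (hquart.log h4)).sub
    ((hasDerivAt_log hx.ne').const_mul (2 * n)) |>.congr_deriv ?_
  field_simp
  ring

lemma logRatio_one_le {m n x : ℝ} (hm : 3 ≤ m) (hn : 3 ≤ n) (hx : 0 < x) :
    logRatio m n 1 ≤ logRatio m n x := by
  have hpos : ∀ y ∈ uIcc 1 x, 0 < y := fun y hy => lt_of_lt_of_le (lt_min one_pos hx) hy.1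
  refine le_of_hasDerivAt_of_mul_sub_nonneg
    (fun y hy => hasDerivAt_logRatio (by linarith) (by linarith) (hpos y hy)) fun y hy => ?_
  have hy := hpos y hy
  have hq := quartic_nonneg hm hn hy.le
  have hsq : 0 ≤ (y - 1) * (y - 1) := mul_self_nonneg _
  rw [mul_div_assoc']
  refine div_nonneg ?_ (by positivity)
  calc (0 : ℝ) ≤ 2 * (m * n) * ((y - 1) * (y - 1))
        * (n * y ^ 4 - 2 * y ^ 3 - 2 * y ^ 2 - 2 * y + m) := by positivity
    _ = _ := by ring

lemma key_estimate_one_var (m n : ℕ) (hm : 3 ≤ m) (hn : 3 ≤ n) {t : ℝ} (ht : 0 < t) :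
    (m + n * t ^ 4) * t ^ (2 * n) * ((m : ℝ) + n) ^ (2 * (m + n) + 3)
      ≤ (m + n * t) ^ (2 * (m + n) + 4) := by
  have hlog := logRatio_one_le (m := m) (n := n) (by exact_mod_cast hm) (by exact_mod_cast hn) ht
  have hK : (0 : ℝ) < m + n := by positivity
  rw [← log_le_log_iff (by positivity) (by positivity), log_mul (by positivity) (by positivity),
    log_mul (by positivity) (by positivity), log_pow, log_pow, log_pow]
  simp only [logRatio, mul_one, one_pow, log_one, mul_zero, sub_zero] at hlog
  push_cast
  linarith

lemma key_estimate (m n : ℕ) (hm : 3 ≤ m) (hn : 3 ≤ n) {X Y : ℝ} (hX : 0 < X) (hY : 0 < Y) :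
    (m * X ^ 4 + n * Y ^ 4) * X ^ (2 * m) * Y ^ (2 * n) * ((m : ℝ) + n) ^ (2 * (m + n) + 3)
      ≤ (m * X + n * Y) ^ (2 * (m + n) + 4) := by
  have key := mul_le_mul_of_nonneg_right (key_estimate_one_var m n hm hn (div_pos hY hX))
    (pow_nonneg hX.le (2 * (m + n) + 4))
  calc _ = (m + n * (Y / X) ^ 4) * (Y / X) ^ (2 * n) * ((m : ℝ) + n) ^ (2 * (m + n) + 3)
        * X ^ (2 * (m + n) + 4) := by
        rw [div_pow, div_pow]
        field_simp
        ring
    _ ≤ (m + n * (Y / X)) ^ (2 * (m + n) + 4) * X ^ (2 * (m + n) + 4) := key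
    _ = _ := by
        rw [← mul_pow]
        field_simp

theorem stmt_5 (k1 k2 : ℕ) (hk1 : 3 ≤ k1) (hk2 : 3 ≤ k2) (X1 X2 : ℝ)
    (hX1 : 0 < X1) (hX2 : 0 < X2) :
    ((Real.sqrt ((k1 : ℝ)/(k1+k2)))^2 * X1^4 + (Real.sqrt ((k2 : ℝ)/(k1+k2)))^2 * X2^4)
        * X1^(2*k1) * X2^(2*k2)
      ≤ ((Real.sqrt ((k1 : ℝ)/(k1+k2)))^2 * X1
          + (Real.sqrt ((k2 : ℝ)/(k1+k2)))^2 * X2)^(2*(k1+k2)+4) := by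
  have hK : (0 : ℝ) < k1 + k2 := by positivity
  rw [sq_sqrt (by positivity), sq_sqrt (by positivity)]
  calc _ = (k1 * X1 ^ 4 + k2 * X2 ^ 4) * X1 ^ (2 * k1) * X2 ^ (2 * k2)
        * ((k1 : ℝ) + k2) ^ (2 * (k1 + k2) + 3) / ((k1 : ℝ) + k2) ^ (2 * (k1 + k2) + 4) := by
        field_simp
        ring
    _ ≤ (k1 * X1 + k2 * X2) ^ (2 * (k1 + k2) + 4) / ((k1 : ℝ) + k2) ^ (2 * (k1 + k2) + 4) := by
        gcongr
        exact key_estimate k1 k2 hk1 hk2 hX1 hX2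
    _ = _ := by
        rw [← div_pow]
        field_simp
end
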